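/- Let p be a prime and let 0 < m ≤ n with p^k ≤ n < p^{k+1}. Suppose m + n > p^{k+1} (Case 1 of the recursive definition of s_p). Then λ(m,n,p) is standard if and only if m + n − p^{k+1} = 1 and λ(p^{k+1}−n, p^{k+1}−m, p) is standard. -/

import Mathlib

/-- The negative reverse of a sequence `(a₁, …, a_u)`, namely `(−a_u, …, −a₁)`. -/
def negRev (s : List ℤ) : List ℤ := s.reverse.map (fun x => -x)

/-- Fuel-based implementation of Barry's recursively defined sequence `s_p(m,n)`.
In every recursive call the quantity `2*m + n` strictly decreases, so fuel
`2*m + n + 1` always suffices; see `sp` below. -/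
def spAux (p : ℕ) : ℕ → ℕ → ℕ → List ℤ
  | 0, _, _ => []
  | (fuel+1), m, n =>
    if m = 0 then List.replicate n (0 : ℤ)
    else
      let k := Nat.log p n
      let q := p ^ k
      let b := n / q
      let d := n % q
      let a := m / q
      let c := m % q
      let s12 : List ℤ × List ℤ :=
        if p ^ (k+1) < m + n then
          -- Case 1
          (List.replicate (m + n - p ^ (k+1)) ((p ^ (k+1) : ℕ) : ℤ),
           spAux p fuel (p ^ (k+1) - n) (p ^ (k+1) - m))
        else if q < c + d then
          -- Case 2
          (List.replicate (c + d - q) (((a + b + 1) * q : ℕ) : ℤ),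
           spAux p fuel ((a + b + 1) * q - n) ((a + b + 1) * q - m))
        else if 1 ≤ c + d ∧ 0 < a then
          -- Case 3
          ((spAux p fuel (min c d) (max c d)).map (fun x => x + (((a + b) * q : ℕ) : ℤ)),
           spAux p fuel ((a + b) * q - n) ((a + b) * q - m))
        else if a = 0 ∧ 0 < d then
          -- Case 4
          (((spAux p fuel m (b * q - d)).filter (fun x => decide (x < 0))).map
              (fun x => x + ((2 * b * q : ℕ) : ℤ)),
           List.replicate (n - m) (0 : ℤ))
        else if a = 0 ∧ d = 0 then
          -- Case 5
          (List.replicate m ((b * q : ℕ) : ℤ),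
           List.replicate (b * q - m) (0 : ℤ))
        else
          -- Case 6
          (List.replicate q (((a + b - 1) * q : ℕ) : ℤ),
           spAux p fuel ((a - 1) * q) ((b - 1) * q))
      s12.1 ++ s12.2 ++ negRev s12.1

/-- Barry's sequence `s_p(m,n)`, a nonincreasing sequence of `m + n` integers. -/
def sp (p m n : ℕ) : List ℤ := spAux p (2 * m + n + 1) m n

/-- The Jordan partition `λ(m,n,p)`: the first `m` terms of `s_p(m,n)`. -/
def jordanPartition (p m n : ℕ) : List ℤ := (sp p m n).take m

/-- `λ(m,n,p)` is standard iff `λ_i = m + n − 2i + 1` for all `1 ≤ i ≤ m`. -/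
def IsStandard (p m n : ℕ) : Prop :=
  jordanPartition p m n =
    (List.range m).map (fun i => (m : ℤ) + (n : ℤ) - 2 * ((i : ℤ) + 1) + 1)

lemma length_negRev (s : List ℤ) : (negRev s).length = s.length := by
  simp [negRev]

lemma mem_negRev {x : ℤ} {s : List ℤ} : x ∈ negRev s ↔ -x ∈ s := by
  simp only [negRev, List.mem_map, List.mem_reverse]
  constructor
  · rintro ⟨y, hy, rfl⟩; simpa using hy
  · intro h; exact ⟨-x, h, neg_neg x⟩

lemma negRev_replicate (r : ℕ) (v : ℤ) :
    negRev (List.replicate r v) = List.replicate r (-v) := by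
  simp [negRev]

lemma fneg_nil {s : List ℤ} (h : ∀ x ∈ s, 0 ≤ x) :
    s.filter (fun x => decide (x < 0)) = [] := by
  rw [List.filter_eq_nil_iff]
  intro a ha
  simpa using not_lt.mpr (h a ha)

lemma fneg_self {s : List ℤ} (h : ∀ x ∈ s, x < 0) :
    s.filter (fun x => decide (x < 0)) = s := by
  rw [List.filter_eq_self]
  intro a ha
  simpa using h a ha

lemma spAux_case1 (p f m n : ℕ) (hm : ¬ m = 0)
    (h1 : p ^ (Nat.log p n + 1) < m + n) :
    spAux p (f+1) m n =
      List.replicate (m + n - p ^ (Nat.log p n + 1)) ((p ^ (Nat.log p n + 1) : ℕ) : ℤ)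
        ++ spAux p f (p ^ (Nat.log p n + 1) - n) (p ^ (Nat.log p n + 1) - m)
        ++ negRev (List.replicate (m + n - p ^ (Nat.log p n + 1)) ((p ^ (Nat.log p n + 1) : ℕ) : ℤ)) := by
  rw [spAux]
  simp only [if_neg hm, if_pos h1]

lemma spAux_case2 (p f m n q a b c d : ℕ) (hm : ¬ m = 0)
    (hq : q = p ^ Nat.log p n) (ha : a = m / q) (hb : b = n / q) (hc : c = m % q) (hd : d = n % q)
    (h1 : ¬ p ^ (Nat.log p n + 1) < m + n) (h2 : q < c + d) :
    spAux p (f+1) m n =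
      List.replicate (c + d - q) (((a + b + 1) * q : ℕ) : ℤ)
        ++ spAux p f ((a + b + 1) * q - n) ((a + b + 1) * q - m)
        ++ negRev (List.replicate (c + d - q) (((a + b + 1) * q : ℕ) : ℤ)) := by
  subst hc hd ha hb hq
  rw [spAux]
  simp only [if_neg hm, if_neg h1, if_pos h2]

lemma spAux_case3 (p f m n q a b c d : ℕ) (hm : ¬ m = 0)
    (hq : q = p ^ Nat.log p n) (ha : a = m / q) (hb : b = n / q) (hc : c = m % q) (hd : d = n % q)
    (h1 : ¬ p ^ (Nat.log p n + 1) < m + n) (h2 : ¬ q < c + d) (h3 : 1 ≤ c + d ∧ 0 < a) :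
    spAux p (f+1) m n =
      (spAux p f (min c d) (max c d)).map (fun x => x + (((a + b) * q : ℕ) : ℤ))
        ++ spAux p f ((a + b) * q - n) ((a + b) * q - m)
        ++ negRev ((spAux p f (min c d) (max c d)).map (fun x => x + (((a + b) * q : ℕ) : ℤ))) := by
  subst hc hd ha hb hq
  rw [spAux]
  simp only [if_neg hm, if_neg h1, if_neg h2, if_pos h3]

lemma spAux_case4 (p f m n q a b c d : ℕ) (hm : ¬ m = 0)
    (hq : q = p ^ Nat.log p n) (ha : a = m / q) (hb : b = n / q) (hc : c = m % q) (hd : d = n % q)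
    (h1 : ¬ p ^ (Nat.log p n + 1) < m + n) (h2 : ¬ q < c + d) (h3 : ¬ (1 ≤ c + d ∧ 0 < a))
    (h4 : a = 0 ∧ 0 < d) :
    spAux p (f+1) m n =
      ((spAux p f m (b * q - d)).filter (fun x => decide (x < 0))).map
          (fun x => x + ((2 * b * q : ℕ) : ℤ))
        ++ List.replicate (n - m) (0 : ℤ)
        ++ negRev (((spAux p f m (b * q - d)).filter (fun x => decide (x < 0))).map
          (fun x => x + ((2 * b * q : ℕ) : ℤ))) := by
  subst hc hd ha hb hq
  rw [spAux]
  simp only [if_neg hm, if_neg h1, if_neg h2, if_neg h3, if_pos h4]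

lemma spAux_case5 (p f m n q a b c d : ℕ) (hm : ¬ m = 0)
    (hq : q = p ^ Nat.log p n) (ha : a = m / q) (hb : b = n / q) (hc : c = m % q) (hd : d = n % q)
    (h1 : ¬ p ^ (Nat.log p n + 1) < m + n) (h2 : ¬ q < c + d) (h3 : ¬ (1 ≤ c + d ∧ 0 < a))
    (h4 : ¬ (a = 0 ∧ 0 < d)) (h5 : a = 0 ∧ d = 0) :
    spAux p (f+1) m n =
      List.replicate m ((b * q : ℕ) : ℤ)
        ++ List.replicate (b * q - m) (0 : ℤ)
        ++ negRev (List.replicate m ((b * q : ℕ) : ℤ)) := by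
  subst hc hd ha hb hq
  rw [spAux]
  simp only [if_neg hm, if_neg h1, if_neg h2, if_neg h3, if_neg h4, if_pos h5]

lemma spAux_case6 (p f m n q a b c d : ℕ) (hm : ¬ m = 0)
    (hq : q = p ^ Nat.log p n) (ha : a = m / q) (hb : b = n / q) (hc : c = m % q) (hd : d = n % q)
    (h1 : ¬ p ^ (Nat.log p n + 1) < m + n) (h2 : ¬ q < c + d) (h3 : ¬ (1 ≤ c + d ∧ 0 < a))
    (h4 : ¬ (a = 0 ∧ 0 < d)) (h5 : ¬ (a = 0 ∧ d = 0)) :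
    spAux p (f+1) m n =
      List.replicate q (((a + b - 1) * q : ℕ) : ℤ)
        ++ spAux p f ((a - 1) * q) ((b - 1) * q)
        ++ negRev (List.replicate q (((a + b - 1) * q : ℕ) : ℤ)) := by
  subst hc hd ha hb hq
  rw [spAux]
  simp only [if_neg hm, if_neg h1, if_neg h2, if_neg h3, if_neg h4, if_neg h5]

lemma spAux_zero (p f n : ℕ) : spAux p (f+1) 0 n = List.replicate n (0:ℤ) := by
  rw [spAux]; simp

lemma spMain (p : ℕ) (hp : 2 ≤ p) :
    ∀ f f' m n, m ≤ n → 2*m+n < f → 2*m+n < f' →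
      spAux p f m n = spAux p f' m n ∧
      (spAux p f m n).length = m + n ∧
      ((spAux p f m n).filter (fun x => decide (x < 0))).length = m ∧
      ∀ x ∈ spAux p f m n, -((m:ℤ)+n) ≤ x ∧ x ≤ (m:ℤ)+n ∧
        (x < 0 → x ≤ (m:ℤ)-n) ∧ (0 < x → (n:ℤ)-m ≤ x) := by
  intro f
  induction f with
  | zero => intro f' m n _ h _; omega
  | succ f IH =>
    intro f' m n hmn hf hf'
    obtain ⟨f'', rfl⟩ : ∃ g, f' = g + 1 := ⟨f' - 1, by omega⟩
    by_cases hm : m = 0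
    · subst hm
      refine ⟨by rw [spAux_zero, spAux_zero], by simp [spAux_zero], ?_, ?_⟩
      · rw [spAux_zero, fneg_nil (by intro x hx; have := List.eq_of_mem_replicate hx; omega)]
        simp
      · rw [spAux_zero]
        intro x hx
        have hx0 := List.eq_of_mem_replicate hx
        exact ⟨by omega, by omega, fun h => by omega, fun h => by omega⟩
    · have hm1 : 1 ≤ m := by omega
      have hn0 : n ≠ 0 := by omega
      obtain ⟨q, hq⟩ : ∃ q, q = p ^ Nat.log p n := ⟨_, rfl⟩
      obtain ⟨a, ha⟩ : ∃ a, a = m / q := ⟨_, rfl⟩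
      obtain ⟨b, hb⟩ : ∃ b, b = n / q := ⟨_, rfl⟩
      obtain ⟨c, hc⟩ : ∃ c, c = m % q := ⟨_, rfl⟩
      obtain ⟨d, hd⟩ : ∃ d, d = n % q := ⟨_, rfl⟩
      have hq1 : 0 < q := by rw [hq]; exact pow_pos (by omega) _
      have hqn : q ≤ n := hq ▸ Nat.pow_log_le_self p hn0
      have hnP : n < p ^ (Nat.log p n + 1) := Nat.lt_pow_succ_log_self (by omega) n
      have hP2 : 2 * q ≤ p ^ (Nat.log p n + 1) := by
        have h := Nat.mul_le_mul_left (p ^ Nat.log p n) hp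
        rw [hq, pow_succ]; omega
      have hm_eq : a * q + c = m := by
        rw [ha, hc, Nat.mul_comm]; exact Nat.div_add_mod m q
      have hn_eq : b * q + d = n := by
        rw [hb, hd, Nat.mul_comm]; exact Nat.div_add_mod n q
      have hcq : c < q := by rw [hc]; exact Nat.mod_lt _ hq1
      have hdq : d < q := by rw [hd]; exact Nat.mod_lt _ hq1
      have hb1 : 1 ≤ b := by rw [hb]; exact (Nat.one_le_div_iff hq1).mpr hqn
      have hBq : q ≤ b * q := by simpa using Nat.mul_le_mul_right q hb1
      have hab : a ≤ b := by rw [ha, hb]; exact Nat.div_le_div_right hmn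
      by_cases h1 : p ^ (Nat.log p n + 1) < m + n
      · -- Case 1
        have E := spAux_case1 p f m n hm h1
        have E' := spAux_case1 p f'' m n hm h1
        obtain ⟨Heq, Hlen, Hcnt, Hmem⟩ :=
          IH f'' (p ^ (Nat.log p n + 1) - n) (p ^ (Nat.log p n + 1) - m)
            (by omega) (by omega) (by omega)
        have hP1 : 0 < p ^ (Nat.log p n + 1) := by omega
        refine ⟨by rw [E, E', Heq], ?_, ?_, ?_⟩
        · rw [E]
          simp only [List.length_append, List.length_replicate, length_negRev, Hlen]
          omega
        · have F1 : (List.replicate (m + n - p ^ (Nat.log p n + 1))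
              ((p ^ (Nat.log p n + 1) : ℕ) : ℤ)).filter (fun x => decide (x < 0)) = [] :=
            fneg_nil (fun x hx => by have := List.eq_of_mem_replicate hx; omega)
          have F3 : (List.replicate (m + n - p ^ (Nat.log p n + 1))
              (-((p ^ (Nat.log p n + 1) : ℕ) : ℤ))).filter (fun x => decide (x < 0)) =
              List.replicate (m + n - p ^ (Nat.log p n + 1))
              (-((p ^ (Nat.log p n + 1) : ℕ) : ℤ)) :=
            fneg_self (fun x hx => by have := List.eq_of_mem_replicate hx; omega)
          rw [E, List.filter_append, List.filter_append, negRev_replicate, F1, F3]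
          simp only [List.length_append, List.length_nil, List.length_replicate, Hcnt]
          omega
        · rw [E]
          intro x hx
          simp only [List.mem_append, mem_negRev] at hx
          rcases hx with (hx | hx) | hx
          · have hxv := List.eq_of_mem_replicate hx
            exact ⟨by omega, by omega, fun h => by omega, fun h => by omega⟩
          · obtain ⟨B1, B2, B3, B4⟩ := Hmem x hx
            exact ⟨by omega, by omega, fun h => by have := B3 h; omega,
              fun h => by have := B4 h; omega⟩
          · have hxv := List.eq_of_mem_replicate hx
            exact ⟨by omega, by omega, fun h => by omega, fun h => by omega⟩
      by_cases h2 : q < c + d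
      · -- Case 2
        have E := spAux_case2 p f m n q a b c d hm hq ha hb hc hd h1 h2
        have E' := spAux_case2 p f'' m n q a b c d hm hq ha hb hc hd h1 h2
        have hS : (a + b + 1) * q = a*q + b*q + q := by ring
        obtain ⟨Heq, Hlen, Hcnt, Hmem⟩ :=
          IH f'' ((a+b+1)*q - n) ((a+b+1)*q - m) (by omega) (by omega) (by omega)
        refine ⟨by rw [E, E', Heq], ?_, ?_, ?_⟩
        · rw [E]
          simp only [List.length_append, List.length_replicate, length_negRev, Hlen]
          omega
        · have F1 : (List.replicate (c + d - q) (((a+b+1)*q : ℕ) : ℤ)).filter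
              (fun x => decide (x < 0)) = [] :=
            fneg_nil (fun x hx => by have := List.eq_of_mem_replicate hx; omega)
          have F3 : (List.replicate (c + d - q) (-(((a+b+1)*q : ℕ) : ℤ))).filter
              (fun x => decide (x < 0)) =
              List.replicate (c + d - q) (-(((a+b+1)*q : ℕ) : ℤ)) :=
            fneg_self (fun x hx => by have := List.eq_of_mem_replicate hx; omega)
          rw [E, List.filter_append, List.filter_append, negRev_replicate, F1, F3]
          simp only [List.length_append, List.length_nil, List.length_replicate, Hcnt]
          omega
        · rw [E]
          intro x hx
          simp only [List.mem_append, mem_negRev] at hx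
          rcases hx with (hx | hx) | hx
          · have hxv := List.eq_of_mem_replicate hx
            exact ⟨by omega, by omega, fun h => by omega, fun h => by omega⟩
          · obtain ⟨B1, B2, B3, B4⟩ := Hmem x hx
            exact ⟨by omega, by omega, fun h => by have := B3 h; omega,
              fun h => by have := B4 h; omega⟩
          · have hxv := List.eq_of_mem_replicate hx
            exact ⟨by omega, by omega, fun h => by omega, fun h => by omega⟩
      · by_cases h3 : 1 ≤ c + d ∧ 0 < a
        · -- Case 3
          obtain ⟨h3a, h3b⟩ := h3
          have E := spAux_case3 p f m n q a b c d hm hq ha hb hc hd h1 h2 ⟨h3a, h3b⟩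
          have E' := spAux_case3 p f'' m n q a b c d hm hq ha hb hc hd h1 h2 ⟨h3a, h3b⟩
          have hAq : q ≤ a * q := by simpa using Nat.mul_le_mul_right q h3b
          have hAB : (a + b) * q = a*q + b*q := by ring
          have hmm : min c d + max c d = c + d := min_add_max c d
          have hminc : min c d ≤ c := min_le_left c d
          have hmind : min c d ≤ d := min_le_right c d
          obtain ⟨Heq1, Hlen1, Hcnt1, Hmem1⟩ :=
            IH f'' (min c d) (max c d) min_le_max (by omega) (by omega)
          obtain ⟨Heq2, Hlen2, Hcnt2, Hmem2⟩ :=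
            IH f'' ((a+b)*q - n) ((a+b)*q - m) (by omega) (by omega) (by omega)
          have Hpos1 : ∀ x ∈ (spAux p f (min c d) (max c d)).map
              (fun x => x + (((a+b)*q : ℕ) : ℤ)), (q:ℤ) ≤ x := by
            intro x hx
            obtain ⟨y, hy, rfl⟩ := List.mem_map.mp hx
            obtain ⟨B1, B2, B3, B4⟩ := Hmem1 y hy
            omega
          refine ⟨by rw [E, E', Heq1, Heq2], ?_, ?_, ?_⟩
          · rw [E]
            simp only [List.length_append, List.length_map, length_negRev, Hlen1, Hlen2]
            omega
          · have F1 : ((spAux p f (min c d) (max c d)).map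
                (fun x => x + (((a+b)*q : ℕ) : ℤ))).filter (fun x => decide (x < 0)) = [] :=
              fneg_nil (fun x hx => by have := Hpos1 x hx; omega)
            have F3 : (negRev ((spAux p f (min c d) (max c d)).map
                (fun x => x + (((a+b)*q : ℕ) : ℤ)))).filter (fun x => decide (x < 0)) =
                negRev ((spAux p f (min c d) (max c d)).map
                (fun x => x + (((a+b)*q : ℕ) : ℤ))) :=
              fneg_self (fun x hx => by have := Hpos1 _ (mem_negRev.mp hx); omega)
            rw [E, List.filter_append, List.filter_append, F1, F3]
            simp only [List.length_append, List.length_nil, length_negRev,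
              List.length_map, Hlen1, Hcnt2]
            omega
          · rw [E]
            intro x hx
            simp only [List.mem_append, mem_negRev] at hx
            rcases hx with (hx | hx) | hx
            · obtain ⟨y, hy, rfl⟩ := List.mem_map.mp hx
              obtain ⟨B1, B2, B3, B4⟩ := Hmem1 y hy
              exact ⟨by omega, by omega, fun h => by omega, fun h => by omega⟩
            · obtain ⟨B1, B2, B3, B4⟩ := Hmem2 x hx
              exact ⟨by omega, by omega, fun h => by have := B3 h; omega,
                fun h => by have := B4 h; omega⟩
            · obtain ⟨y, hy, hyx⟩ := List.mem_map.mp hx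
              obtain ⟨B1, B2, B3, B4⟩ := Hmem1 y hy
              exact ⟨by omega, by omega, fun h => by omega, fun h => by omega⟩
        · by_cases h4 : a = 0 ∧ 0 < d
          · -- Case 4
            obtain ⟨ha0, hd1⟩ := h4
            have E := spAux_case4 p f m n q a b c d hm hq ha hb hc hd h1 h2 h3 ⟨ha0, hd1⟩
            have E' := spAux_case4 p f'' m n q a b c d hm hq ha hb hc hd h1 h2 h3 ⟨ha0, hd1⟩
            have hA0 : a * q = 0 := by rw [ha0, zero_mul]
            have hmc : m = c := by omega
            have h2B : 2 * b * q = b*q + b*q := by ring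
            have hmd : m ≤ b * q - d := by omega
            obtain ⟨Heq, Hlen, Hcnt, Hmem⟩ := IH f'' m (b*q - d) hmd (by omega) (by omega)
            have Hpos1 : ∀ x ∈ ((spAux p f m (b*q - d)).filter
                (fun x => decide (x < 0))).map (fun x => x + ((2*b*q : ℕ) : ℤ)),
                (d:ℤ) ≤ x := by
              intro x hx
              obtain ⟨y, hy, rfl⟩ := List.mem_map.mp hx
              have hy' := List.mem_filter.mp hy
              have hyneg : y < 0 := by simpa using hy'.2
              obtain ⟨B1, B2, B3, B4⟩ := Hmem y hy'.1
              omega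
            refine ⟨by rw [E, E', Heq], ?_, ?_, ?_⟩
            · rw [E]
              simp only [List.length_append, List.length_map, length_negRev,
                List.length_replicate, Hcnt]
              omega
            · have F1 : (((spAux p f m (b*q - d)).filter
                  (fun x => decide (x < 0))).map (fun x => x + ((2*b*q : ℕ) : ℤ))).filter
                  (fun x => decide (x < 0)) = [] :=
                fneg_nil (fun x hx => by have := Hpos1 x hx; omega)
              have F2 : (List.replicate (n-m) (0:ℤ)).filter (fun x => decide (x < 0)) = [] :=
                fneg_nil (fun x hx => by have := List.eq_of_mem_replicate hx; omega)
              have F3 : (negRev (((spAux p f m (b*q - d)).filter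
                  (fun x => decide (x < 0))).map (fun x => x + ((2*b*q : ℕ) : ℤ)))).filter
                  (fun x => decide (x < 0)) =
                  negRev (((spAux p f m (b*q - d)).filter
                  (fun x => decide (x < 0))).map (fun x => x + ((2*b*q : ℕ) : ℤ))) :=
                fneg_self (fun x hx => by have := Hpos1 _ (mem_negRev.mp hx); omega)
              rw [E, List.filter_append, List.filter_append, F1, F2, F3]
              simp only [List.length_append, List.length_nil, length_negRev,
                List.length_map, Hcnt]
              omega
            · rw [E]
              intro x hx
              simp only [List.mem_append, mem_negRev] at hx
              rcases hx with (hx | hx) | hx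
              · obtain ⟨y, hy, rfl⟩ := List.mem_map.mp hx
                have hy' := List.mem_filter.mp hy
                have hyneg : y < 0 := by simpa using hy'.2
                obtain ⟨B1, B2, B3, B4⟩ := Hmem y hy'.1
                have hB3 := B3 hyneg
                exact ⟨by omega, by omega, fun h => by omega, fun h => by omega⟩
              · have hx0 := List.eq_of_mem_replicate hx
                exact ⟨by omega, by omega, fun h => by omega, fun h => by omega⟩
              · obtain ⟨y, hy, hyx⟩ := List.mem_map.mp hx
                have hy' := List.mem_filter.mp hy
                have hyneg : y < 0 := by simpa using hy'.2
                obtain ⟨B1, B2, B3, B4⟩ := Hmem y hy'.1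
                have hB3 := B3 hyneg
                exact ⟨by omega, by omega, fun h => by omega, fun h => by omega⟩
          · by_cases h5 : a = 0 ∧ d = 0
            · -- Case 5
              obtain ⟨ha0, hd0⟩ := h5
              have E := spAux_case5 p f m n q a b c d hm hq ha hb hc hd h1 h2 h3 h4 ⟨ha0, hd0⟩
              have E' := spAux_case5 p f'' m n q a b c d hm hq ha hb hc hd h1 h2 h3 h4 ⟨ha0, hd0⟩
              have hA0 : a * q = 0 := by rw [ha0, zero_mul]
              have hnB : n = b * q := by omega
              refine ⟨by rw [E, E'], ?_, ?_, ?_⟩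
              · rw [E]
                simp only [List.length_append, List.length_replicate, length_negRev]
                omega
              · have F1 : (List.replicate m ((b*q : ℕ) : ℤ)).filter
                    (fun x => decide (x < 0)) = [] :=
                  fneg_nil (fun x hx => by have := List.eq_of_mem_replicate hx; omega)
                have F2 : (List.replicate (b*q - m) (0:ℤ)).filter
                    (fun x => decide (x < 0)) = [] :=
                  fneg_nil (fun x hx => by have := List.eq_of_mem_replicate hx; omega)
                have F3 : (List.replicate m (-((b*q : ℕ) : ℤ))).filter
                    (fun x => decide (x < 0)) = List.replicate m (-((b*q : ℕ) : ℤ)) :=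
                  fneg_self (fun x hx => by have := List.eq_of_mem_replicate hx; omega)
                rw [E, List.filter_append, List.filter_append, negRev_replicate, F1, F2, F3]
                simp only [List.length_append, List.length_nil, List.length_replicate]
                omega
              · rw [E]
                intro x hx
                simp only [List.mem_append, mem_negRev] at hx
                rcases hx with (hx | hx) | hx
                · have hxv := List.eq_of_mem_replicate hx
                  exact ⟨by omega, by omega, fun h => by omega, fun h => by omega⟩
                · have hxv := List.eq_of_mem_replicate hx
                  exact ⟨by omega, by omega, fun h => by omega, fun h => by omega⟩
                · have hxv := List.eq_of_mem_replicate hx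
                  exact ⟨by omega, by omega, fun h => by omega, fun h => by omega⟩
            · -- Case 6
              have ha1 : 0 < a := by
                by_contra hca
                have ha0 : a = 0 := by omega
                rcases Nat.eq_zero_or_pos d with h' | h'
                · exact h5 ⟨ha0, h'⟩
                · exact h4 ⟨ha0, h'⟩
              have hcd0 : c + d = 0 := by
                by_contra hcd
                exact h3 ⟨by omega, ha1⟩
              have hAq : q ≤ a * q := by simpa using Nat.mul_le_mul_right q ha1
              have hABle : a * q ≤ b * q := Nat.mul_le_mul_right q hab
              have h6s : (a + b - 1) * q = a*q + b*q - q := by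
                rw [Nat.sub_mul, one_mul, add_mul]
              have h6a : (a - 1) * q = a*q - q := by rw [Nat.sub_mul, one_mul]
              have h6b : (b - 1) * q = b*q - q := by rw [Nat.sub_mul, one_mul]
              have E := spAux_case6 p f m n q a b c d hm hq ha hb hc hd h1 h2 h3 h4 h5
              have E' := spAux_case6 p f'' m n q a b c d hm hq ha hb hc hd h1 h2 h3 h4 h5
              obtain ⟨Heq, Hlen, Hcnt, Hmem⟩ :=
                IH f'' ((a-1)*q) ((b-1)*q) (by omega) (by omega) (by omega)
              refine ⟨by rw [E, E', Heq], ?_, ?_, ?_⟩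
              · rw [E]
                simp only [List.length_append, List.length_replicate, length_negRev, Hlen]
                omega
              · have F1 : (List.replicate q (((a+b-1)*q : ℕ) : ℤ)).filter
                    (fun x => decide (x < 0)) = [] :=
                  fneg_nil (fun x hx => by have := List.eq_of_mem_replicate hx; omega)
                have F3 : (List.replicate q (-(((a+b-1)*q : ℕ) : ℤ))).filter
                    (fun x => decide (x < 0)) =
                    List.replicate q (-(((a+b-1)*q : ℕ) : ℤ)) :=
                  fneg_self (fun x hx => by have := List.eq_of_mem_replicate hx; omega)
                rw [E, List.filter_append, List.filter_append, negRev_replicate, F1, F3]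
                simp only [List.length_append, List.length_nil, List.length_replicate, Hcnt]
                omega
              · rw [E]
                intro x hx
                simp only [List.mem_append, mem_negRev] at hx
                rcases hx with (hx | hx) | hx
                · have hxv := List.eq_of_mem_replicate hx
                  exact ⟨by omega, by omega, fun h => by omega, fun h => by omega⟩
                · obtain ⟨B1, B2, B3, B4⟩ := Hmem x hx
                  exact ⟨by omega, by omega, fun h => by have := B3 h; omega,
                    fun h => by have := B4 h; omega⟩
                · have hxv := List.eq_of_mem_replicate hx
                  exact ⟨by omega, by omega, fun h => by omega, fun h => by omega⟩

lemma take_helper {α : Type*} (L1 L2 L3 : List α) (mm i : ℕ)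
    (h0 : mm = L1.length + i) (h2 : i ≤ L2.length) :
    (L1 ++ L2 ++ L3).take mm = L1 ++ L2.take i := by
  subst h0
  rw [List.append_assoc, List.take_length_add_append, List.take_append_of_le_length h2]

lemma bind_pure_map (f : ℕ → ℤ) (l : List ℕ) :
    (l >>= fun a => pure (f a)) = l.map f := by
  induction l with
  | nil => rfl
  | cons x t ih =>
    rw [show ((x :: t) >>= fun a => pure (f a)) = [f x] ++ (t >>= fun a => pure (f a)) from rfl,
      ih]
    rfl

lemma stdform (m n : ℕ) :
    ((List.range m).map (fun i => (m : ℤ) + (n : ℤ) - 2 * ((i : ℤ) + 1) + 1) : List ℤ) =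
      (List.range m).map (fun i : ℕ => (m : ℤ) + (n : ℤ) - 2 * ((i : ℕ) + 1 : ℤ) + 1) := by
  rw [bind_pure_map (fun a => (a : ℤ)), List.map_map]
  rfl

/-- **Proposition 1, Case 1 (Barry).** Let `p` be prime, `0 < m ≤ n` with
`pᵏ ≤ n < p^(k+1)` and `m + n > p^(k+1)`. Then `λ(m,n,p)` is standard iff
`m + n − p^(k+1) = 1` and `λ(p^(k+1)−n, p^(k+1)−m, p)` is standard. -/
theorem jordanPartition_standard_iff_case1 (p : ℕ) (hp : Nat.Prime p)
    (m n k : ℕ) (hm : 0 < m) (hmn : m ≤ n)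
    (hk1 : p ^ k ≤ n) (hk2 : n < p ^ (k + 1))
    (hcase : p ^ (k + 1) < m + n) :
    IsStandard p m n ↔
      (m + n - p ^ (k + 1) = 1 ∧ IsStandard p (p ^ (k + 1) - n) (p ^ (k + 1) - m)) := by
  have hp2 : 2 ≤ p := hp.two_le
  have hm0 : ¬ m = 0 := by omega
  have hlog : Nat.log p n = k := Nat.log_eq_of_pow_le_of_lt_pow hk1 hk2
  obtain ⟨Hfe, Hlen, -, -⟩ :=
    spMain p hp2 (2*m+n) (2*(p^(k+1)-n)+(p^(k+1)-m)+1) (p^(k+1)-n) (p^(k+1)-m)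
      (by omega) (by omega) (by omega)
  have hJ' : jordanPartition p (p^(k+1)-n) (p^(k+1)-m) =
      (spAux p (2*m+n) (p^(k+1)-n) (p^(k+1)-m)).take (p^(k+1)-n) := by
    unfold jordanPartition sp
    rw [← Hfe]
  have key : jordanPartition p m n =
      List.replicate (m+n-p^(k+1)) ((p^(k+1) : ℕ) : ℤ)
        ++ jordanPartition p (p^(k+1)-n) (p^(k+1)-m) := by
    have h1' : p ^ (Nat.log p n + 1) < m + n := by rw [hlog]; exact hcase
    have E := spAux_case1 p (2*m+n) m n hm0 h1'
    rw [hlog] at E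
    show (sp p m n).take m = _
    rw [show sp p m n = spAux p (2*m+n+1) m n from rfl, E, hJ']
    exact take_helper _ _ _ m (p^(k+1)-n)
      (by rw [List.length_replicate]; omega) (by rw [Hlen]; omega)
  unfold IsStandard
  rw [stdform, stdform, key]
  obtain ⟨m'', rfl⟩ : ∃ m'', m = m'' + 1 := ⟨m - 1, by omega⟩
  rw [List.range_succ_eq_map, List.map_cons, List.map_map]
  constructor
  · intro hstd
    obtain ⟨r', hr'⟩ : ∃ r', m''+1+n-p^(k+1) = r'+1 := ⟨m''+1+n-p^(k+1)-1, by omega⟩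
    rw [hr', List.replicate_succ, List.cons_append, List.cons.injEq] at hstd
    obtain ⟨h0, htl⟩ := hstd
    have hP : p^(k+1) = m'' + n := by omega
    have hr0 : r' = 0 := by omega
    subst hr0
    simp only [List.replicate_zero, List.nil_append] at htl
    refine ⟨by omega, ?_⟩
    rw [htl, show p^(k+1) - n = m'' by omega]
    apply List.map_congr_left
    intro i hi
    simp only [Function.comp_apply]
    have hi' : i < m'' := List.mem_range.mp hi
    omega
  · rintro ⟨hr1, hstd'⟩
    have hP : p^(k+1) = m'' + n := by omega
    rw [hr1, hstd', List.replicate_succ, List.replicate_zero, List.cons_append,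
      List.nil_append, List.cons.injEq]
    constructor
    · omega
    · rw [show p^(k+1) - n = m'' by omega]
      apply List.map_congr_left
      intro i hi
      simp only [Function.comp_apply]
      have hi' : i < m'' := List.mem_range.mp hi
      omega
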